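/- arXiv:2502.13697 — 2 statements merged into one kernel-verified Lean document; each statement's English description precedes it below -/
import Mathlib

section
/- If the vMDP is regular, then every basic feasible solution x of the state-action frequency polytope satisfies: for each epoch t = 1,...,T-1 and each state j, there is exactly one action a' ∈ A_j with x_t(j,a') > 0, and x_t(j,a) = 0 for all other actions a. -/
/-!
Every feasible `x` is the frequency vector of the policy that, at epoch `t` and state `s`,
chooses actions in proportion to `x_t(s, ·)`. The frequency vector of a policy `π` is the
convex combination, with weights `π_t(s, ·)`, of the frequency vectors of the policies that
agree with `π` except that at `(t, s)` they play one fixed action: such a change leaves the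
frequencies up to epoch `t` untouched and acts linearly on the later ones. An extreme point is
therefore the frequency vector of one of these policies, so at `(t, s)` all its mass sits on a
single action, and regularity makes that mass positive.
-/

open Finset

/-- A finite-horizon MDP with `N` states, horizon `T` (epochs `0,…,T-1`, so `T ≥ 2` has at
least one decision epoch), action sets `Fin (k s)` for each state `s`, and transition
probabilities `p t s a j = p_t(j | s, a)` governing the move from epoch `t` to `t+1`,
together with a strictly positive initial distribution `α`. -/
structure MDP (N T : ℕ) (k : Fin N → ℕ) : Type where
  p : ℕ → (s : Fin N) → Fin (k s) → Fin N → ℝ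
  α : Fin N → ℝ
  p_nonneg : ∀ t s a j, 0 ≤ p t s a j
  p_sum : ∀ t s a, ∑ j, p t s a j = 1
  α_pos : ∀ s, 0 < α s
  α_sum : ∑ s, α s = 1

/-- A (randomized, Markov, non-stationary) policy: `q t s a` is the probability that
action `a` is chosen in state `s` at decision epoch `t`. -/
structure Policy (N : ℕ) (k : Fin N → ℕ) : Type where
  q : ℕ → (s : Fin N) → Fin (k s) → ℝ
  q_nonneg : ∀ t s a, 0 ≤ q t s a
  q_sum : ∀ t s, ∑ a, q t s a = 1

variable {N T : ℕ} {k : Fin N → ℕ}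

/-- `condProb M π j t s` is `P^π(S_t = s | S_0 = j)` (epochs indexed from 0). -/
def condProb (M : MDP N T k) (π : Policy N k) (j : Fin N) : ℕ → Fin N → ℝ
  | 0, s => if s = j then 1 else 0
  | t+1, s => ∑ s', ∑ a, condProb M π j t s' * π.q t s' a * M.p t s' a s

/-- The state-action frequency `x_{π,t}(s,a) = ∑_j α(j) P^π(S_t = s, A_t = a | S_0 = j)`
(epochs indexed from 0, so the decision epochs are `0,…,T-2`). -/
def xsa (M : MDP N T k) (π : Policy N k) (t : ℕ) (s : Fin N) (a : Fin (k s)) : ℝ :=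
  ∑ j, M.α j * condProb M π j t s * π.q t s a

/-- The terminal state frequency `x_{π,T}(s)` (terminal epoch is `T-1` in 0-based indexing). -/
def xT (M : MDP N T k) (π : Policy N k) (s : Fin N) : ℝ :=
  ∑ j, M.α j * condProb M π j (T-1) s

variable (TT : ℕ)

/-- The finite-dimensional space housing state-action frequency vectors for a horizon
`TT + 2` process: a component `x.1 t s a` for every decision epoch `t ∈ {0,…,TT}`, state
`s` and action `a`, and a terminal component `x.2 s` for every state `s`. -/
abbrev FreqSpace (N : ℕ) (k : Fin N → ℕ) (TT : ℕ) : Type :=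
  (Fin (TT+1) → (s : Fin N) → Fin (k s) → ℝ) × (Fin N → ℝ)

/-- Membership in the state-action frequency polytope `P`: nonnegativity together with the
initial condition (a), flow conservation (b), and the terminal condition (c). -/
def inP {N : ℕ} {k : Fin N → ℕ} {TT : ℕ} (M : MDP N (TT+2) k)
    (x : FreqSpace N k TT) : Prop :=
  (∀ t s a, 0 ≤ x.1 t s a) ∧ (∀ s, 0 ≤ x.2 s) ∧
  (∀ j, ∑ a, x.1 0 j a = M.α j) ∧
  (∀ (t : Fin TT) (j : Fin N),
    ∑ a, x.1 t.succ j a = ∑ s, ∑ a, M.p (t : ℕ) s a j * x.1 t.castSucc s a) ∧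
  (∀ j, x.2 j = ∑ s, ∑ a, M.p TT s a j * x.1 (Fin.last TT) s a)

/-- The state-action frequency polytope `P`. -/
def Pset {N : ℕ} {k : Fin N → ℕ} {TT : ℕ} (M : MDP N (TT+2) k) :
    Set (FreqSpace N k TT) :=
  {x | inP M x}

/-- The state-action frequency vector `x_π` of a policy, as a point of `FreqSpace`. -/
def xvec {N : ℕ} {k : Fin N → ℕ} {TT : ℕ} (M : MDP N (TT+2) k) (π : Policy N k) :
    FreqSpace N k TT :=
  (fun t s a => xsa M π (t : ℕ) s a, fun s => xT M π s)

/-- The process is regular when every policy can reach every state at every epoch. -/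
def RegularProcess {N : ℕ} {k : Fin N → ℕ} {TT : ℕ} (M : MDP N (TT+2) k) : Prop :=
  ∀ (π : Policy N k) (t : ℕ) (s : Fin N), t ≤ TT + 1 → ∃ j, 0 < condProb M π j t s

/-- A policy is deterministic (up to the horizon) if at every decision epoch and state it
puts probability one on a single action. -/
def Deterministic {N : ℕ} (k : Fin N → ℕ) (TT : ℕ) (π : Policy N k) : Prop :=
  ∀ t s, t ≤ TT → ∃ a, π.q t s a = 1

/-- A policy is regular if at every decision epoch and every state unreachable there, it
puts full mass on the first action. -/
def RegularPol {N : ℕ} {k : Fin N → ℕ} {TT : ℕ} (M : MDP N (TT+2) k)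
    (hk : ∀ s, 1 ≤ k s) (π : Policy N k) : Prop :=
  ∀ t s, t ≤ TT → (∀ j, condProb M π j t s = 0) → π.q t s ⟨0, hk s⟩ = 1

lemma exists_eq_of_mem_extremePoints_of_eq_sum {𝕜 E ι : Type*} [Field 𝕜] [LinearOrder 𝕜]
    [IsStrictOrderedRing 𝕜] [AddCommGroup E] [Module 𝕜 E] [Fintype ι] {A : Set E}
    (hA : Convex 𝕜 A) {x : E} (hx : x ∈ A.extremePoints 𝕜) {w : ι → 𝕜} {z : ι → E}
    (hw₀ : ∀ i, 0 ≤ w i) (hw₁ : ∑ i, w i = 1) (hz : ∀ i, z i ∈ A)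
    (hxz : x = ∑ i, w i • z i) : ∃ i, z i = x := by
  have hx_hull : x ∈ convexHull 𝕜 (Set.range z) := hxz ▸ (convex_convexHull 𝕜 _).sum_mem
    (fun i _ => hw₀ i) hw₁ fun i _ => subset_convexHull 𝕜 _ (Set.mem_range_self i)
  have hhull_sub : convexHull 𝕜 (Set.range z) ⊆ A :=
    convexHull_min (Set.range_subset_iff.2 hz) hA
  exact extremePoints_convexHull_subset (A := Set.range z)
    (inter_extremePoints_subset_extremePoints_of_subset hhull_sub ⟨hx_hull, hx⟩)

section Normalize

variable {ι : Type*} [Fintype ι]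

noncomputable def normalizeOr (f d : ι → ℝ) : ι → ℝ :=
  if ∑ i, f i = 0 then d else fun i => f i / ∑ j, f j

lemma normalizeOr_nonneg {f d : ι → ℝ} (hf : ∀ i, 0 ≤ f i) (hd : ∀ i, 0 ≤ d i) (i : ι) :
    0 ≤ normalizeOr f d i := by
  unfold normalizeOr
  split_ifs
  exacts [hd i, div_nonneg (hf i) (sum_nonneg fun j _ => hf j)]

lemma sum_normalizeOr (f : ι → ℝ) {d : ι → ℝ} (hd : ∑ i, d i = 1) :
    ∑ i, normalizeOr f d i = 1 := by
  unfold normalizeOr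
  split_ifs with h
  exacts [hd, by rw [← sum_div, div_self h]]

lemma sum_mul_normalizeOr {f : ι → ℝ} (hf : ∀ i, 0 ≤ f i) (d : ι → ℝ) (i : ι) :
    (∑ j, f j) * normalizeOr f d i = f i := by
  unfold normalizeOr
  split_ifs with h
  · rw [h, zero_mul, (sum_eq_zero_iff_of_nonneg fun j _ => hf j).1 h i (mem_univ i)]
  · exact mul_div_cancel₀ _ h

end Normalize

section Occupation

variable {N T : ℕ} {k : Fin N → ℕ} (M : MDP N T k)

lemma condProb_nonneg (π : Policy N k) (j : Fin N) : ∀ t s, 0 ≤ condProb M π j t s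
  | 0, s => by simp only [condProb]; split_ifs <;> norm_num
  | t + 1, s => sum_nonneg fun s' _ => sum_nonneg fun a _ =>
      mul_nonneg (mul_nonneg (condProb_nonneg π j t s') (π.q_nonneg _ _ _))
        (M.p_nonneg _ _ _ _)

lemma condProb_congr {π π' : Policy N k} {t : ℕ} (h : ∀ t' < t, π.q t' = π'.q t')
    (j s : Fin N) : condProb M π j t s = condProb M π' j t s := by
  induction t generalizing s with
  | zero => rfl
  | succ t ih =>
    simp only [condProb, ih fun t' ht' => h t' (by omega), h t (by omega)]

def stateFreq (π : Policy N k) (t : ℕ) (s : Fin N) : ℝ :=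
  ∑ j, M.α j * condProb M π j t s

lemma stateFreq_nonneg (π : Policy N k) (t : ℕ) (s : Fin N) : 0 ≤ stateFreq M π t s :=
  sum_nonneg fun j _ => mul_nonneg (M.α_pos j).le (condProb_nonneg M π j t s)

lemma stateFreq_zero (π : Policy N k) (s : Fin N) : stateFreq M π 0 s = M.α s := by
  simp [stateFreq, condProb]

lemma xsa_eq_stateFreq_mul (π : Policy N k) (t : ℕ) (s : Fin N) (a : Fin (k s)) :
    xsa M π t s a = stateFreq M π t s * π.q t s a := by
  simp only [xsa, stateFreq, sum_mul]

lemma sum_xsa (π : Policy N k) (t : ℕ) (s : Fin N) :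
    ∑ a, xsa M π t s a = stateFreq M π t s := by
  simp only [xsa_eq_stateFreq_mul, ← mul_sum, π.q_sum, mul_one]

lemma stateFreq_succ (π : Policy N k) (t : ℕ) (s : Fin N) :
    stateFreq M π (t + 1) s = ∑ s', ∑ a, M.p t s' a s * xsa M π t s' a := by
  simp only [stateFreq, xsa, condProb, mul_sum]
  rw [sum_comm]
  refine sum_congr rfl fun s' _ => ?_
  rw [sum_comm]
  exact sum_congr rfl fun a _ => sum_congr rfl fun j _ => by ring

lemma sum_mul_stateFreq_succ {ι : Type*} [Fintype ι] (w : ι → ℝ) (π : ι → Policy N k)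
    (σ : Policy N k) (t : ℕ)
    (h : ∀ s a, ∑ i, w i * xsa M (π i) t s a = xsa M σ t s a) (s : Fin N) :
    ∑ i, w i * stateFreq M (π i) (t + 1) s = stateFreq M σ (t + 1) s := by
  simp only [stateFreq_succ, mul_sum, ← h]
  rw [sum_comm]
  refine sum_congr rfl fun s' _ => ?_
  rw [sum_comm]
  exact sum_congr rfl fun a _ => sum_congr rfl fun i _ => by ring

end Occupation

lemma RegularProcess.stateFreq_pos {N TT : ℕ} {k : Fin N → ℕ} {M : MDP N (TT + 2) k}
    (hreg : RegularProcess M) (π : Policy N k) {t : ℕ} (ht : t ≤ TT + 1) (s : Fin N) :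
    0 < stateFreq M π t s := by
  obtain ⟨j, hj⟩ := hreg π t s ht
  exact sum_pos' (fun i _ => mul_nonneg (M.α_pos i).le (condProb_nonneg M π i t s))
    ⟨j, mem_univ j, mul_pos (M.α_pos j) hj⟩

section Polytope

variable {N TT : ℕ} {k : Fin N → ℕ} (M : MDP N (TT + 2) k)

lemma xvec_mem_Pset (π : Policy N k) : xvec M π ∈ Pset M := by
  refine ⟨fun t s a => ?_, fun s => stateFreq_nonneg M π _ s, fun j => ?_, fun t j => ?_,
    fun j => stateFreq_succ M π TT j⟩
  · simpa [xvec, xsa_eq_stateFreq_mul] using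
      mul_nonneg (stateFreq_nonneg M π t s) (π.q_nonneg _ _ _)
  · simpa [xvec, sum_xsa] using stateFreq_zero M π j
  · simpa [xvec, sum_xsa] using stateFreq_succ M π t j

lemma convex_Pset : Convex ℝ (Pset M) := by
  rintro y ⟨hy₁, hy₂, hy₃, hy₄, hy₅⟩ z ⟨hz₁, hz₂, hz₃, hz₄, hz₅⟩ a b ha hb hab
  refine ⟨fun t s c => ?_, fun s => ?_, fun j => ?_, fun t j => ?_, fun j => ?_⟩
  · simpa using add_nonneg (mul_nonneg ha (hy₁ t s c)) (mul_nonneg hb (hz₁ t s c))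
  · simpa using add_nonneg (mul_nonneg ha (hy₂ s)) (mul_nonneg hb (hz₂ s))
  · simp [sum_add_distrib, ← mul_sum, hy₃, hz₃, ← add_mul, hab]
  · simp only [Prod.fst_add, Prod.smul_fst, Pi.add_apply, Pi.smul_apply, smul_eq_mul, mul_add,
      sum_add_distrib, mul_left_comm (M.p _ _ _ _) a, mul_left_comm (M.p _ _ _ _) b, ← mul_sum,
      hy₄, hz₄]
  · simp only [Prod.fst_add, Prod.smul_fst, Prod.snd_add, Prod.smul_snd, Pi.add_apply,
      Pi.smul_apply, smul_eq_mul, mul_add, sum_add_distrib, mul_left_comm (M.p _ _ _ _) a,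
      mul_left_comm (M.p _ _ _ _) b, ← mul_sum, hy₅, hz₅]

end Polytope

section InducedPolicy

variable {N TT : ℕ} {k : Fin N → ℕ} (M : MDP N (TT + 2) k) {x : FreqSpace N k TT}
  (hx : x ∈ Pset M)

/-- Where `x` puts no mass on `s` at epoch `t`, and beyond the horizon, the policy falls back
on `x₀(s, ·) / α(s)`, a distribution by the initial condition. -/
noncomputable def inducedPolicy : Policy N k where
  q t s := normalizeOr (fun a => if h : t < TT + 1 then x.1 ⟨t, h⟩ s a else 0)
    fun a => x.1 0 s a / M.α s
  q_nonneg t s := normalizeOr_nonneg (fun a => by split_ifs; exacts [hx.1 _ s a, le_rfl])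
    fun a => div_nonneg (hx.1 0 s a) (M.α_pos s).le
  q_sum t s := sum_normalizeOr _ (by rw [← sum_div, hx.2.2.1 s, div_self (M.α_pos s).ne'])

lemma inducedPolicy_q (t : Fin (TT + 1)) (s : Fin N) :
    (inducedPolicy M hx).q t s = normalizeOr (x.1 t s) fun a => x.1 0 s a / M.α s := by
  simp only [inducedPolicy, dif_pos t.isLt, Fin.eta]

lemma xsa_inducedPolicy_of_stateFreq {t : Fin (TT + 1)} {s : Fin N}
    (h : stateFreq M (inducedPolicy M hx) t s = ∑ a, x.1 t s a) (a : Fin (k s)) :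
    xsa M (inducedPolicy M hx) t s a = x.1 t s a := by
  rw [xsa_eq_stateFreq_mul, h, inducedPolicy_q, sum_mul_normalizeOr (hx.1 t s)]

lemma stateFreq_inducedPolicy (t : Fin (TT + 1)) (s : Fin N) :
    stateFreq M (inducedPolicy M hx) t s = ∑ a, x.1 t s a := by
  induction t using Fin.induction generalizing s with
  | zero => simpa [stateFreq_zero] using (hx.2.2.1 s).symm
  | succ t ih =>
    rw [Fin.val_succ, stateFreq_succ, hx.2.2.2.1 t s]
    exact sum_congr rfl fun s' _ => sum_congr rfl fun a _ =>
      congrArg _ (xsa_inducedPolicy_of_stateFreq M hx (ih s') a)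

lemma xvec_inducedPolicy : xvec M (inducedPolicy M hx) = x := by
  have hxsa (t : Fin (TT + 1)) (s : Fin N) (a : Fin (k s)) :=
    xsa_inducedPolicy_of_stateFreq M hx (stateFreq_inducedPolicy M hx t s) a
  refine Prod.ext (funext fun t => funext fun s => funext (hxsa t s)) (funext fun s => ?_)
  change stateFreq M _ (TT + 1) s = x.2 s
  rw [hx.2.2.2.2 s, stateFreq_succ]
  exact sum_congr rfl fun s' _ => sum_congr rfl fun a _ =>
    congrArg _ (hxsa (Fin.last TT) s' a)

end InducedPolicy

namespace Policy

variable {N : ℕ} {k : Fin N → ℕ} (π : Policy N k) (t₀ : ℕ) (s₀ : Fin N)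

def setAction (a₀ : Fin (k s₀)) : Policy N k where
  q t s a := if t = t₀ ∧ s = s₀ then if (a : ℕ) = a₀ then 1 else 0 else π.q t s a
  q_nonneg t s a := by split_ifs <;> first | exact π.q_nonneg t s a | norm_num
  q_sum t s := by
    by_cases h : t = t₀ ∧ s = s₀
    · obtain ⟨rfl, rfl⟩ := h
      simp [Fin.val_inj]
    · simp only [if_neg h, π.q_sum]

variable {t₀ s₀} {a₀ : Fin (k s₀)}

lemma setAction_q_of_ne {t : ℕ} {s : Fin N} (h : ¬(t = t₀ ∧ s = s₀)) :
    (π.setAction t₀ s₀ a₀).q t s = π.q t s :=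
  funext fun _ => if_neg h

lemma setAction_q_self (a : Fin (k s₀)) :
    (π.setAction t₀ s₀ a₀).q t₀ s₀ a = if a = a₀ then 1 else 0 := by
  simp [setAction, Fin.val_inj]

lemma sum_mul_setAction_q (t : ℕ) (s : Fin N) (a : Fin (k s)) :
    ∑ a₀, π.q t₀ s₀ a₀ * (π.setAction t₀ s₀ a₀).q t s a = π.q t s a := by
  by_cases h : t = t₀ ∧ s = s₀
  · obtain ⟨rfl, rfl⟩ := h
    simp [setAction_q_self]
  · simp only [setAction_q_of_ne π h, ← sum_mul, π.q_sum, one_mul]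

end Policy

section Mixture

variable {N T : ℕ} {k : Fin N → ℕ} (M : MDP N T k) (π : Policy N k) {t₀ : ℕ}
  {s₀ : Fin N}

lemma stateFreq_setAction_of_le {t : ℕ} (ht : t ≤ t₀) (a₀ : Fin (k s₀)) (s : Fin N) :
    stateFreq M (π.setAction t₀ s₀ a₀) t s = stateFreq M π t s := by
  have hq : ∀ t' < t, (π.setAction t₀ s₀ a₀).q t' = π.q t' := fun t' ht' =>
    funext fun _ => π.setAction_q_of_ne fun h => (ht'.trans_le ht).ne h.1
  simp only [stateFreq, condProb_congr M hq]

lemma xsa_setAction_self (a₀ a : Fin (k s₀)) :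
    xsa M (π.setAction t₀ s₀ a₀) t₀ s₀ a =
      stateFreq M π t₀ s₀ * if a = a₀ then 1 else 0 := by
  rw [xsa_eq_stateFreq_mul, stateFreq_setAction_of_le M π le_rfl, π.setAction_q_self]

lemma sum_mul_xsa_setAction {t : ℕ} {s : Fin N}
    (h : ∑ a₀, π.q t₀ s₀ a₀ * stateFreq M (π.setAction t₀ s₀ a₀) t s = stateFreq M π t s)
    (a : Fin (k s)) :
    ∑ a₀, π.q t₀ s₀ a₀ * xsa M (π.setAction t₀ s₀ a₀) t s a = xsa M π t s a := by
  simp only [xsa_eq_stateFreq_mul]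
  by_cases hts : t = t₀ ∧ s = s₀
  · obtain ⟨rfl, rfl⟩ := hts
    simp only [stateFreq_setAction_of_le M π le_rfl, mul_left_comm _ (stateFreq M π _ _),
      ← mul_sum, π.sum_mul_setAction_q]
  · simp only [π.setAction_q_of_ne hts, ← mul_assoc, ← sum_mul, h]

lemma sum_mul_stateFreq_setAction (t : ℕ) (s : Fin N) :
    ∑ a₀, π.q t₀ s₀ a₀ * stateFreq M (π.setAction t₀ s₀ a₀) t s = stateFreq M π t s := by
  induction t generalizing s with
  | zero => simp only [stateFreq_zero, ← sum_mul, π.q_sum, one_mul]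
  | succ t ih =>
    exact sum_mul_stateFreq_succ M _ _ π t (fun s => sum_mul_xsa_setAction M π (ih s)) s

end Mixture

lemma xvec_eq_sum_setAction {N TT : ℕ} {k : Fin N → ℕ} (M : MDP N (TT + 2) k)
    (π : Policy N k) (t₀ : ℕ) (s₀ : Fin N) :
    xvec M π = ∑ a₀, π.q t₀ s₀ a₀ • xvec M (π.setAction t₀ s₀ a₀) := by
  refine Prod.ext (funext fun t => funext fun s => funext fun a => ?_) (funext fun s => ?_)
  · simp only [xvec, Prod.fst_sum, Prod.smul_fst, Finset.sum_apply, Pi.smul_apply,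
      smul_eq_mul]
    exact (sum_mul_xsa_setAction M π (sum_mul_stateFreq_setAction M π t s) a).symm
  · simp only [xvec, Prod.snd_sum, Prod.smul_snd, Finset.sum_apply, Pi.smul_apply,
      smul_eq_mul]
    exact (sum_mul_stateFreq_setAction M π (TT + 1) s).symm

theorem vertex_unique_positive_action_general (N TT : ℕ) (k : Fin N → ℕ)
    (M : MDP N (TT+2) k) (hreg : RegularProcess M)
    (x : FreqSpace N k TT) (hx : x ∈ Set.extremePoints ℝ (Pset M)) :
    ∀ (t : Fin (TT+1)) (s : Fin N), ∃ a' : Fin (k s),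
      0 < x.1 t s a' ∧ ∀ a : Fin (k s), a ≠ a' → x.1 t s a = 0 := by
  intro t s
  set π := inducedPolicy M hx.1
  obtain ⟨a', hxa'⟩ := exists_eq_of_mem_extremePoints_of_eq_sum (convex_Pset M) hx
    (π.q_nonneg t s) (π.q_sum t s) (fun a => xvec_mem_Pset M (π.setAction t s a))
    ((xvec_inducedPolicy M hx.1).symm.trans (xvec_eq_sum_setAction M π t s))
  have hx_ts (a : Fin (k s)) : x.1 t s a = stateFreq M π t s * if a = a' then 1 else 0 := by
    rw [← hxa']
    exact xsa_setAction_self M π a' a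
  have hfreq := hreg.stateFreq_pos π t.isLt.le s
  exact ⟨a', by simpa [hx_ts] using hfreq, fun a ha => by simp [hx_ts, ha]⟩

/-- if the vMDP is regular then every basic feasible solution (vertex /
extreme point) `x` of the state-action frequency polytope has, at each decision epoch `t`
and state `s`, exactly one action `a'` with `x.1 t s a' > 0`, all other actions having
frequency zero. -/
theorem vertex_unique_positive_action (N TT : ℕ) (k : Fin N → ℕ) (hk : ∀ s, 1 ≤ k s)
    (M : MDP N (TT+2) k) (hreg : RegularProcess M)
    (x : FreqSpace N k TT) (hx : x ∈ Set.extremePoints ℝ (Pset M)) :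
    ∀ (t : Fin (TT+1)) (s : Fin N), ∃ a' : Fin (k s),
      0 < x.1 t s a' ∧ ∀ a : Fin (k s), a ≠ a' → x.1 t s a = 0 :=
  vertex_unique_positive_action_general N TT k M hreg x hx
end

section
/- Given any selection of actions a_{st} ∈ A_s for every state s and epoch t = 1,...,T-1, there exists a unique state-action frequency vector x ∈ P with x_t(s,a') = 0 for all a' ≠ a_{st}; moreover this x is a vertex of P. It is determined by the recursion x_1(j,a_{j1}) = α(j), x_{t+1}(j,a_{j,t+1}) = ∑_s p_t(j|s,a_{st}) x_t(s,a_{st}), and x_T(j) = ∑_s p_{T-1}(j|s,a_{s,T-1}) x_{T-1}(s,a_{s,T-1}). -/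
open Finset

variable {N T : ℕ} {k : Fin N → ℕ}

variable (TT : ℕ)

/-!
For a vector supported on the selected actions, every sum over actions in the constraints of `P`
collapses to its selected term, so membership in `P` amounts to nonnegativity plus the explicit
recursion, and the recursion determines the vector. Since all coordinates are nonnegative on `P`,
the points of `P` vanishing off the selection form a face of `P`; this face is a single point,
hence a vertex.
-/

theorem isExtreme_setOf_forall_eq_zero {𝕜 E ι : Type*} [Field 𝕜] [LinearOrder 𝕜]
    [IsStrictOrderedRing 𝕜] [AddCommGroup E] [Module 𝕜 E] {S : Set E} (ℓ : ι → E →ₗ[𝕜] 𝕜)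
    (hS : ∀ y ∈ S, ∀ i, 0 ≤ ℓ i y) :
    IsExtreme 𝕜 S {y ∈ S | ∀ i, ℓ i y = 0} := by
  refine ⟨fun y hy => hy.1, fun y₁ hy₁ y₂ hy₂ x hx hseg => ?_⟩
  obtain ⟨a, b, ha, hb, -, rfl⟩ := hseg
  refine ⟨hy₁, fun i => ?_⟩
  have hsum : a * ℓ i y₁ + b * ℓ i y₂ = 0 := by simpa using hx.2 i
  rw [add_eq_zero_iff_of_nonneg (mul_nonneg ha.le (hS y₁ hy₁ i))
    (mul_nonneg hb.le (hS y₂ hy₂ i))] at hsum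
  exact (mul_eq_zero.1 hsum.1).resolve_left ha.ne'

section Selection

variable {TT}
variable (M : MDP N (TT+2) k) (σ : Fin (TT+1) → (s : Fin N) → Fin (k s))

def SupportedOn (x : FreqSpace N k TT) : Prop :=
  ∀ t s a, a ≠ σ t s → x.1 t s a = 0

def SelectionRecursion (x : FreqSpace N k TT) : Prop :=
  (∀ j, x.1 0 j (σ 0 j) = M.α j) ∧
  (∀ (t : Fin TT) (j : Fin N), x.1 t.succ j (σ t.succ j) =
    ∑ s, M.p (t : ℕ) s (σ t.castSucc s) j * x.1 t.castSucc s (σ t.castSucc s)) ∧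
  (∀ j, x.2 j =
    ∑ s, M.p TT s (σ (Fin.last TT) s) j * x.1 (Fin.last TT) s (σ (Fin.last TT) s))

variable {M σ}

theorem SupportedOn.sum_mul {x : FreqSpace N k TT} (hx : SupportedOn σ x) (t : Fin (TT+1))
    (s : Fin N) (g : Fin (k s) → ℝ) : ∑ a, g a * x.1 t s a = g (σ t s) * x.1 t s (σ t s) :=
  Fintype.sum_eq_single _ fun a ha => by rw [hx t s a ha, mul_zero]

theorem SupportedOn.sum {x : FreqSpace N k TT} (hx : SupportedOn σ x) (t : Fin (TT+1))
    (s : Fin N) : ∑ a, x.1 t s a = x.1 t s (σ t s) :=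
  Fintype.sum_eq_single _ fun a ha => hx t s a ha

theorem inP_iff_of_supportedOn {x : FreqSpace N k TT} (hx : SupportedOn σ x) :
    inP M x ↔ (∀ t s a, 0 ≤ x.1 t s a) ∧ (∀ s, 0 ≤ x.2 s) ∧ SelectionRecursion M σ x := by
  simp only [inP, SelectionRecursion, hx.sum, hx.sum_mul]

theorem SelectionRecursion.eq {x y : FreqSpace N k TT} (hxr : SelectionRecursion M σ x)
    (hyr : SelectionRecursion M σ y) (hx : SupportedOn σ x) (hy : SupportedOn σ y) :
    x = y := by
  have hdiag : ∀ t s, x.1 t s (σ t s) = y.1 t s (σ t s) := by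
    intro t
    induction t using Fin.induction with
    | zero => intro s; rw [hxr.1, hyr.1]
    | succ t ih => intro s; simp only [hxr.2.1, hyr.2.1, ih]
  have hdecisions : x.1 = y.1 := by
    funext t s a
    by_cases ha : a = σ t s
    · subst ha; exact hdiag t s
    · rw [hx t s a ha, hy t s a ha]
  exact Prod.ext hdecisions (funext fun j => by rw [hxr.2.2, hyr.2.2, hdecisions])

theorem isExtreme_setOf_supportedOn :
    IsExtreme ℝ (Pset M) {y ∈ Pset M | SupportedOn σ y} := by
  let ℓ : ((t : Fin (TT+1)) × (s : Fin N) × {a // a ≠ σ t s}) → FreqSpace N k TT →ₗ[ℝ] ℝ :=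
    fun i => LinearMap.proj (i.2.2 : Fin (k i.2.1)) ∘ₗ LinearMap.proj i.2.1 ∘ₗ
      LinearMap.proj i.1 ∘ₗ LinearMap.fst ℝ _ _
  have hzeros : {y ∈ Pset M | SupportedOn σ y} = {y ∈ Pset M | ∀ i, ℓ i y = 0} :=
    Set.ext fun y => and_congr_right fun _ =>
      ⟨fun hy ⟨t, s, a, ha⟩ => hy t s a ha, fun hy t s a ha => hy ⟨t, s, a, ha⟩⟩
  exact hzeros ▸ isExtreme_setOf_forall_eq_zero ℓ fun y hy i => hy.1 _ _ _

variable (M σ)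

def selectionDiag : Fin (TT+1) → Fin N → ℝ :=
  Fin.induction M.α fun t d j => ∑ s, M.p (t : ℕ) s (σ t.castSucc s) j * d s

@[simp]
theorem selectionDiag_zero : selectionDiag M σ 0 = M.α := rfl

@[simp]
theorem selectionDiag_succ (t : Fin TT) (j : Fin N) : selectionDiag M σ t.succ j =
    ∑ s, M.p (t : ℕ) s (σ t.castSucc s) j * selectionDiag M σ t.castSucc s := rfl

theorem selectionDiag_nonneg (t : Fin (TT+1)) (s : Fin N) : 0 ≤ selectionDiag M σ t s := by
  induction t using Fin.induction generalizing s with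
  | zero => exact (M.α_pos s).le
  | succ t ih =>
    rw [selectionDiag_succ]
    exact Finset.sum_nonneg fun s' _ => mul_nonneg (M.p_nonneg _ _ _ _) (ih s')

def selectionVector : FreqSpace N k TT :=
  (fun t s a => if a = σ t s then selectionDiag M σ t s else 0,
    fun j => ∑ s, M.p TT s (σ (Fin.last TT) s) j * selectionDiag M σ (Fin.last TT) s)

theorem supportedOn_selectionVector : SupportedOn σ (selectionVector M σ) :=
  fun _ _ _ ha => if_neg ha

theorem selectionRecursion_selectionVector : SelectionRecursion M σ (selectionVector M σ) := by
  simp [SelectionRecursion, selectionVector]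

theorem selectionVector_mem : inP M (selectionVector M σ) := by
  refine (inP_iff_of_supportedOn (supportedOn_selectionVector M σ)).2
    ⟨fun t s a => ?_, fun j => ?_, selectionRecursion_selectionVector M σ⟩
  · dsimp only [selectionVector]
    split_ifs
    exacts [selectionDiag_nonneg M σ t s, le_rfl]
  · dsimp only [selectionVector]
    exact Finset.sum_nonneg fun s _ =>
      mul_nonneg (M.p_nonneg _ _ _ _) (selectionDiag_nonneg M σ _ s)

end Selection

theorem selection_vertex_general (N TT : ℕ) (k : Fin N → ℕ)
    (M : MDP N (TT+2) k) (σ : Fin (TT+1) → (s : Fin N) → Fin (k s)) :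
    ∃ x : FreqSpace N k TT,
      (inP M x ∧ (∀ t s a', a' ≠ σ t s → x.1 t s a' = 0) ∧
        x ∈ Set.extremePoints ℝ (Pset M) ∧
        (∀ j, x.1 0 j (σ 0 j) = M.α j) ∧
        (∀ (t : Fin TT) (j : Fin N), x.1 t.succ j (σ t.succ j) =
          ∑ s, M.p (t : ℕ) s (σ t.castSucc s) j * x.1 t.castSucc s (σ t.castSucc s)) ∧
        (∀ j, x.2 j =
          ∑ s, M.p TT s (σ (Fin.last TT) s) j * x.1 (Fin.last TT) s (σ (Fin.last TT) s))) ∧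
      ∀ y : FreqSpace N k TT, inP M y →
        (∀ t s a', a' ≠ σ t s → y.1 t s a' = 0) → y = x := by
  set x := selectionVector M σ
  have hxs : SupportedOn σ x := supportedOn_selectionVector M σ
  have hxr : SelectionRecursion M σ x := selectionRecursion_selectionVector M σ
  have huniq : ∀ y, inP M y → SupportedOn σ y → y = x := fun y hy hys =>
    ((inP_iff_of_supportedOn hys).1 hy).2.2.eq hxr hys hxs
  have hface : {y ∈ Pset M | SupportedOn σ y} = {x} :=
    Set.ext fun y => ⟨fun hy => huniq y hy.1 hy.2, fun hy => hy ▸ ⟨selectionVector_mem M σ, hxs⟩⟩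
  have hext : x ∈ Set.extremePoints ℝ (Pset M) :=
    (hface ▸ isExtreme_setOf_supportedOn).mem_extremePoints
  exact ⟨x, ⟨selectionVector_mem M σ, hxs, hext, hxr⟩, huniq⟩

/-- given a selection `σ` of one action per state and decision epoch, there
is a unique state-action frequency vector `x ∈ P` vanishing at all non-selected actions;
it is a vertex (extreme point) of `P`, and it satisfies the explicit recursion
`x_0(j, σ_0(j)) = α(j)`,
`x_{t+1}(j, σ_{t+1}(j)) = ∑_s p_t(j|s, σ_t(s)) x_t(s, σ_t(s))`, and
`x_T(j) = ∑_s p_{T-1}(j|s, σ_{T-1}(s)) x_{T-1}(s, σ_{T-1}(s))`. -/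
theorem selection_vertex (N TT : ℕ) (k : Fin N → ℕ) (hk : ∀ s, 1 ≤ k s)
    (M : MDP N (TT+2) k) (σ : Fin (TT+1) → (s : Fin N) → Fin (k s)) :
    ∃ x : FreqSpace N k TT,
      (inP M x ∧ (∀ t s a', a' ≠ σ t s → x.1 t s a' = 0) ∧
        x ∈ Set.extremePoints ℝ (Pset M) ∧
        (∀ j, x.1 0 j (σ 0 j) = M.α j) ∧
        (∀ (t : Fin TT) (j : Fin N), x.1 t.succ j (σ t.succ j) =
          ∑ s, M.p (t : ℕ) s (σ t.castSucc s) j * x.1 t.castSucc s (σ t.castSucc s)) ∧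
        (∀ j, x.2 j =
          ∑ s, M.p TT s (σ (Fin.last TT) s) j * x.1 (Fin.last TT) s (σ (Fin.last TT) s))) ∧
      ∀ y : FreqSpace N k TT, inP M y →
        (∀ t s a', a' ≠ σ t s → y.1 t s a' = 0) → y = x :=
  selection_vertex_general N TT k M σ
end
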